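/- arXiv:2305.12273 — 6 statements merged into one kernel-verified Lean document; each statement's English description precedes it below -/
import Mathlib

section
/- (Shifting principle) Let A be an associative algebra over ℂ (or an associative ring) and let φ and ψ be additive (linear) maps from A to A satisfying φ(x)·z·φ(y) = φ(x·ψ(z)·y) and ψ(x)·z·ψ(y) = ψ(x·φ(z)·y) for all x, y, z ∈ A. Then for all x, y ∈ A: there exists u ∈ A with u − x = x·ψ(y)·u and u − x = u·ψ(y)·x if and only if there exists w ∈ A with w − φ(x) = φ(x)·y·w and w − φ(x) = w·y·φ(x). Equivalently, x is quasi-invertible in the homotope A_{ψ(y)} if and only if φ(x) is quasi-invertible in the homotope A_y. -/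
/-!
A quasi-inverse `u` of `x` in `A_{ψ y}` is carried by `φ` to the quasi-inverse `φ u` of `φ x`
in `A_y`. Conversely, if `w` is the quasi-inverse of `φ x` in `A_y`, then `v = ψ (y * w * y)`
satisfies `v = ψ y * x * ψ y + ψ y * x * v` and its mirror image, and any such `v` yields the
quasi-inverse `x + x * ψ y * x + x * v * x` of `x` in `A_{ψ y}`.
-/

section HomotopeQuasiInverse

variable {A : Type*} [NonUnitalRing A] {φ ψ : A →+ A}

def IsHomotopeQuasiInverse (u x q : A) : Prop :=
  q - x = x * u * q ∧ q - x = q * u * x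

theorem IsHomotopeQuasiInverse.of_sandwich {u x v : A}
    (h₁ : v = u * x * u + u * x * v) (h₂ : v = u * x * u + v * x * u) :
    IsHomotopeQuasiInverse u x (x + x * u * x + x * v * x) := by
  constructor
  · nth_rw 1 [h₁]
    noncomm_ring
  · nth_rw 1 [h₂]
    noncomm_ring

theorem IsHomotopeQuasiInverse.map (hφ : ∀ x z y : A, φ x * z * φ y = φ (x * ψ z * y))
    {x y u : A} (h : IsHomotopeQuasiInverse (ψ y) x u) :
    IsHomotopeQuasiInverse y (φ x) (φ u) := by
  constructor
  · rw [← map_sub, h.1, hφ]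
  · rw [← map_sub, h.2, hφ]

theorem IsHomotopeQuasiInverse.sandwich_of_map
    (hψ : ∀ x z y : A, ψ x * z * ψ y = ψ (x * φ z * y))
    {x y w : A} (h : IsHomotopeQuasiInverse y (φ x) w) :
    ψ (y * w * y) = ψ y * x * ψ y + ψ y * x * ψ (y * w * y) ∧
      ψ (y * w * y) = ψ y * x * ψ y + ψ (y * w * y) * x * ψ y := by
  have hw₁ : w = φ x + φ x * y * w := by rw [← h.1, add_sub_cancel]
  have hw₂ : w = φ x + w * y * φ x := by rw [← h.2, add_sub_cancel]
  constructor
  · rw [hψ, hψ, ← map_add]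
    congr 1
    nth_rw 1 [hw₁]
    noncomm_ring
  · rw [hψ, hψ, ← map_add]
    congr 1
    nth_rw 1 [hw₂]
    noncomm_ring

end HomotopeQuasiInverse

/-- Shifting principle: under the intertwining identities for the additive maps `φ` and `ψ`,
`x` is quasi-invertible in the homotope `A_{ψ(y)}` iff `φ(x)` is quasi-invertible in the
homotope `A_y`. -/
theorem shifting_principle {A : Type*} [NonUnitalRing A] (φ ψ : A →+ A)
    (hφ : ∀ x z y : A, φ x * z * φ y = φ (x * ψ z * y))
    (hψ : ∀ x z y : A, ψ x * z * ψ y = ψ (x * φ z * y))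
    (x y : A) :
    (∃ u : A, u - x = x * ψ y * u ∧ u - x = u * ψ y * x) ↔
    (∃ w : A, w - φ x = φ x * y * w ∧ w - φ x = w * y * φ x) := by
  constructor
  · rintro ⟨u, hu⟩
    exact ⟨φ u, IsHomotopeQuasiInverse.map hφ hu⟩
  · rintro ⟨w, hw⟩
    obtain ⟨hv₁, hv₂⟩ := IsHomotopeQuasiInverse.sandwich_of_map hψ hw
    exact ⟨_, IsHomotopeQuasiInverse.of_sandwich hv₁ hv₂⟩
end

section
/- Let A be an associative ring, let e ∈ A be an idempotent (e·e = e), and let x ∈ A satisfy x = e·x·e. Suppose that for every u ∈ A with u = e·u·e there exists v ∈ A with v = e·v·e, v − x = v·u·x and v − x = x·u·v (i.e. x is quasi-invertible in every homotope of the corner eAe). Then for every y ∈ A there exists w ∈ A with w − x = w·y·x and w − x = x·y·w; that is, x is quasi-invertible in every homotope A_y of A. -/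
namespace IsIdempotentElem

variable {S : Type*} [Semigroup S] {e : S}

theorem mul_eq_of_eq_mul_mul (he : IsIdempotentElem e) {a : S} (ha : a = e * a * e) :
    e * a = a := by
  rw [ha, ← mul_assoc, ← mul_assoc, he.eq]

theorem eq_mul_of_eq_mul_mul (he : IsIdempotentElem e) {a : S} (ha : a = e * a * e) :
    a * e = a := by
  rw [ha, mul_assoc, he.eq]

theorem mul_mul_mem_corner (he : IsIdempotentElem e) (y : S) :
    e * y * e = e * (e * y * e) * e := by
  calc e * y * e = e * e * y * (e * e) := by rw [he.eq]
    _ = e * (e * y * e) * e := by simp only [mul_assoc]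

end IsIdempotentElem

theorem mul_mul_mul_sandwich {S : Type*} [Semigroup S] {e a b : S} (ha : a * e = a)
    (hb : e * b = b) (y : S) : a * (e * y * e) * b = a * y * b := by
  rw [← mul_assoc, ← mul_assoc, ha, mul_assoc (a * y), hb]

/-- If `x = e·x·e` (for an idempotent `e`) is quasi-invertible in every homotope of the
corner `eAe`, then `x` is quasi-invertible in every homotope of `A`. -/
theorem quasiInvertible_of_corner_quasiInvertible {A : Type*} [NonUnitalRing A]
    (e : A) (he : e * e = e) (x : A) (hx : x = e * x * e)
    (hcorner : ∀ u : A, u = e * u * e →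
      ∃ v : A, v = e * v * e ∧ v - x = v * u * x ∧ v - x = x * u * v) :
    ∀ y : A, ∃ w : A, w - x = w * y * x ∧ w - x = x * y * w := by
  have he : IsIdempotentElem e := he
  intro y
  obtain ⟨v, hv, hvx, hxv⟩ := hcorner (e * y * e) (he.mul_mul_mem_corner y)
  refine ⟨v, ?_, ?_⟩
  · rw [hvx, mul_mul_mul_sandwich (he.eq_mul_of_eq_mul_mul hv) (he.mul_eq_of_eq_mul_mul hx)]
  · rw [hxv, mul_mul_mul_sandwich (he.eq_mul_of_eq_mul_mul hx) (he.mul_eq_of_eq_mul_mul hv)]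
end

section
/- Every TRO is semisimple. Precisely: let H and K be complex Hilbert spaces and let M be a norm-closed complex linear subspace of the bounded operators B(H, K) such that x ∘ y* ∘ z ∈ M for all x, y, z ∈ M (y* denoting the Hilbert-space adjoint). If x ∈ M has the property that for every u ∈ M there exists y ∈ M with y − x = y ∘ u* ∘ x and y − x = x ∘ u* ∘ y, then x = 0. -/
/-!
For `u ∈ M` put `w = u†`. If `y` is a quasi-inverse of `x` in the homotope `M_u`, then `w ∘ y`
is a quasi-inverse of `w ∘ x` in the ring `B(H)`, so `1 - w ∘ x` is invertible. Taking
`u = conj c • x` shows that `1 - c • x† x` is invertible for every `c : ℂ`, i.e. the spectrum of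
the positive operator `x† x` is `{0}`. A normal element of a C⋆-algebra with spectrum `{0}`
vanishes, hence `x† x = 0` and `x = 0`.
-/

open ContinuousLinearMap

lemma isUnit_one_sub_of_quasiInverse {R : Type*} [Ring R] {b d : R}
    (h₁ : d - b = d * b) (h₂ : d - b = b * d) : IsUnit (1 - b) := by
  refine ⟨⟨1 - b, 1 + d, ?_, ?_⟩, rfl⟩
  · calc (1 - b) * (1 + d) = 1 + (d - b) - b * d := by noncomm_ring
      _ = 1 := by rw [← h₂]; abel
  · calc (1 + d) * (1 - b) = 1 + (d - b) - d * b := by noncomm_ring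
      _ = 1 := by rw [← h₁]; abel

lemma ContinuousLinearMap.isUnit_one_sub_comp_of_quasiInverse {𝕜 E F : Type*}
    [NontriviallyNormedField 𝕜] [NormedAddCommGroup E] [NormedSpace 𝕜 E]
    [NormedAddCommGroup F] [NormedSpace 𝕜 F] {x y : E →L[𝕜] F} {w : F →L[𝕜] E}
    (h₁ : y - x = y ∘L w ∘L x) (h₂ : y - x = x ∘L w ∘L y) : IsUnit (1 - w ∘L x) := by
  have hw : w ∘L y - w ∘L x = w ∘L (y - x) := (comp_sub w y x).symm
  refine isUnit_one_sub_of_quasiInverse (d := w ∘L y) ?_ ?_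
  · rw [hw, h₁]; rfl
  · rw [hw, h₂]; rfl

lemma spectrum_subset_zero_of_forall_isUnit_one_sub_smul {R A : Type*} [Field R] [Ring A]
    [Algebra R A] {a : A} (h : ∀ c : R, IsUnit (1 - c • a)) : spectrum R a ⊆ {0} := by
  intro μ hμ
  by_contra hμ0
  rw [Set.mem_singleton_iff] at hμ0
  apply spectrum.mem_iff.mp hμ
  rw [Algebra.algebraMap_eq_smul_one, ← Units.val_mk0 hμ0, ← Units.smul_def,
    IsUnit.smul_sub_iff_sub_inv_smul]
  exact h _

lemma IsStarNormal.eq_zero_of_forall_isUnit_one_sub_smul {A : Type*} [CStarAlgebra A] {a : A}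
    [IsStarNormal a] (h : ∀ c : ℂ, IsUnit (1 - c • a)) : a = 0 :=
  CFC.eq_zero_of_spectrum_subset_zero (R := ℂ) a
    (spectrum_subset_zero_of_forall_isUnit_one_sub_smul h)

theorem tro_semisimple_general {H K : Type*}
    [NormedAddCommGroup H] [InnerProductSpace ℂ H] [CompleteSpace H]
    [NormedAddCommGroup K] [InnerProductSpace ℂ K] [CompleteSpace K]
    (M : Submodule ℂ (H →L[ℂ] K))
    (x : H →L[ℂ] K) (hx : x ∈ M)
    (hqi : ∀ u ∈ M, ∃ y ∈ M, y - x = y ∘L ((adjoint u) ∘L x) ∧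
      y - x = x ∘L ((adjoint u) ∘L y)) :
    x = 0 := by
  have hunit : ∀ c : ℂ, IsUnit (1 - c • (adjoint x ∘L x)) := by
    intro c
    obtain ⟨y, -, h₁, h₂⟩ := hqi (starRingEnd ℂ c • x) (M.smul_mem _ hx)
    have hw : adjoint (starRingEnd ℂ c • x) ∘L x = c • (adjoint x ∘L x) := by
      rw [map_smulₛₗ, starRingEnd_self_apply, smul_comp]
    simpa only [hw] using isUnit_one_sub_comp_of_quasiInverse h₁ h₂
  have hsa : IsSelfAdjoint (adjoint x ∘L x) := by
    rw [IsSelfAdjoint, star_eq_adjoint, adjoint_comp, adjoint_adjoint]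
  have : IsStarNormal (adjoint x ∘L x) := hsa.isStarNormal
  exact adjoint_comp_self_eq_zero_iff.mp
    (IsStarNormal.eq_zero_of_forall_isUnit_one_sub_smul hunit)

/-- Every TRO is semisimple: an element of a TRO that is quasi-invertible in every
homotope is zero. -/
theorem tro_semisimple {H K : Type*}
    [NormedAddCommGroup H] [InnerProductSpace ℂ H] [CompleteSpace H]
    [NormedAddCommGroup K] [InnerProductSpace ℂ K] [CompleteSpace K]
    (M : Submodule ℂ (H →L[ℂ] K)) (hclosed : IsClosed (M : Set (H →L[ℂ] K)))
    (hTRO : ∀ x ∈ M, ∀ y ∈ M, ∀ z ∈ M, x ∘L ((adjoint y) ∘L z) ∈ M)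
    (x : H →L[ℂ] K) (hx : x ∈ M)
    (hqi : ∀ u ∈ M, ∃ y ∈ M, y - x = y ∘L ((adjoint u) ∘L x) ∧
      y - x = x ∘L ((adjoint u) ∘L y)) :
    x = 0 :=
  tro_semisimple_general M x hx hqi
end

section
/- Every anti-TRO is semisimple. Precisely: let H and K be complex Hilbert spaces and let M be a norm-closed complex linear subspace of B(H, K) such that x ∘ y* ∘ z ∈ M for all x, y, z ∈ M, equipped with the triple product [x y z] = −(x ∘ y* ∘ z). If x ∈ M has the property that for every u ∈ M there exists y ∈ M with y − x = −(y ∘ u* ∘ x) and y − x = −(x ∘ u* ∘ y), then x = 0. -/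
open ContinuousLinearMap

/-!
If `x ≠ 0`, take `u = -x / ‖x* x‖`. Composing the two quasi-inverse equations with `u*` on the
left shows that `u* y` is a two-sided ring quasi-inverse of `u* x`, so `1 + u* x = 1 - x* x / ‖x* x‖`
is invertible. But `‖x* x‖` lies in the spectrum of the positive operator `x* x`, a contradiction.
-/

theorem isUnit_one_add_of_sub_eq_neg_mul {R : Type*} [Ring R] {s t : R}
    (hst : s - t = -(s * t)) (hts : s - t = -(t * s)) : IsUnit (1 + t) := by
  refine isUnit_iff_exists.mpr ⟨1 - s, ?_, ?_⟩
  · have : t * s = t - s := by rw [← neg_sub s t, hts, neg_neg]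
    rw [add_mul, one_mul, mul_sub, mul_one, this]; abel
  · have : s * t = t - s := by rw [← neg_sub s t, hst, neg_neg]
    rw [sub_mul, one_mul, mul_add, mul_one, this]; abel

theorem isUnit_one_add_comp_of_sub_eq_neg_comp {R E F : Type*} [Ring R]
    [TopologicalSpace E] [AddCommGroup E] [Module R E] [IsTopologicalAddGroup E]
    [TopologicalSpace F] [AddCommGroup F] [Module R F] [IsTopologicalAddGroup F]
    {x y : E →L[R] F} {v : F →L[R] E}
    (h₁ : y - x = -(y ∘L v ∘L x)) (h₂ : y - x = -(x ∘L v ∘L y)) :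
    IsUnit (1 + v ∘L x) := by
  refine isUnit_one_add_of_sub_eq_neg_mul (s := v ∘L y) ?_ ?_
  · simpa only [comp_sub, comp_neg, mul_def, comp_assoc] using congrArg (v ∘L ·) h₁
  · simpa only [comp_sub, comp_neg, mul_def, comp_assoc] using congrArg (v ∘L ·) h₂

theorem CStarAlgebra.not_isUnit_one_sub_inv_norm_smul {A : Type*} [CStarAlgebra A]
    [PartialOrder A] [StarOrderedRing A] {a : A} (ha : 0 ≤ a) (ha₀ : a ≠ 0) :
    ¬ IsUnit (1 - ‖a‖⁻¹ • a) := by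
  have : Nontrivial A := ⟨⟨a, 0, ha₀⟩⟩
  have hnorm : ‖a‖ ≠ 0 := norm_ne_zero_iff.mpr ha₀
  have hspec := spectrum.mem_iff.mp (CStarAlgebra.norm_mem_spectrum_of_nonneg ha)
  contrapose! hspec
  have : algebraMap ℝ A ‖a‖ - a = ‖a‖ • (1 - ‖a‖⁻¹ • a) := by
    rw [smul_sub, smul_smul, mul_inv_cancel₀ hnorm, one_smul, Algebra.algebraMap_eq_smul_one]
  rw [this]
  exact hspec.smul (Units.mk0 _ hnorm)

theorem ContinuousLinearMap.adjoint_real_smul {H K : Type*}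
    [NormedAddCommGroup H] [InnerProductSpace ℂ H] [CompleteSpace H]
    [NormedAddCommGroup K] [InnerProductSpace ℂ K] [CompleteSpace K]
    (r : ℝ) (x : H →L[ℂ] K) : adjoint (r • x) = r • adjoint x := by
  simp [← Complex.coe_smul, map_smulₛₗ]

theorem antiTRO_semisimple_general {H K : Type*}
    [NormedAddCommGroup H] [InnerProductSpace ℂ H] [CompleteSpace H]
    [NormedAddCommGroup K] [InnerProductSpace ℂ K] [CompleteSpace K]
    (M : Submodule ℂ (H →L[ℂ] K))
    (x : H →L[ℂ] K) (hx : x ∈ M)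
    (hqi : ∀ u ∈ M, ∃ y ∈ M, y - x = -(y ∘L ((adjoint u) ∘L x)) ∧
      y - x = -(x ∘L ((adjoint u) ∘L y))) :
    x = 0 := by
  by_contra hx₀
  set a := adjoint x ∘L x
  have ha₀ : a ≠ 0 := by
    rw [← norm_ne_zero_iff, norm_adjoint_comp_self]
    exact mul_ne_zero (norm_ne_zero_iff.mpr hx₀) (norm_ne_zero_iff.mpr hx₀)
  obtain ⟨y, -, h₁, h₂⟩ := hqi ((-‖a‖⁻¹) • x) (M.smul_of_tower_mem _ hx)
  refine CStarAlgebra.not_isUnit_one_sub_inv_norm_smul ?_ ha₀ ?_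
  · exact (nonneg_iff_isPositive _).mpr (isPositive_adjoint_comp_self x)
  · simpa [adjoint_real_smul, sub_eq_add_neg] using isUnit_one_add_comp_of_sub_eq_neg_comp h₁ h₂

/-- Every anti-TRO is semisimple: an element of an anti-TRO that is quasi-invertible
in every homotope is zero. -/
theorem antiTRO_semisimple {H K : Type*}
    [NormedAddCommGroup H] [InnerProductSpace ℂ H] [CompleteSpace H]
    [NormedAddCommGroup K] [InnerProductSpace ℂ K] [CompleteSpace K]
    (M : Submodule ℂ (H →L[ℂ] K)) (hclosed : IsClosed (M : Set (H →L[ℂ] K)))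
    (hTRO : ∀ x ∈ M, ∀ y ∈ M, ∀ z ∈ M, x ∘L ((adjoint y) ∘L z) ∈ M)
    (x : H →L[ℂ] K) (hx : x ∈ M)
    (hqi : ∀ u ∈ M, ∃ y ∈ M, y - x = -(y ∘L ((adjoint u) ∘L x)) ∧
      y - x = -(x ∘L ((adjoint u) ∘L y))) :
    x = 0 :=
  antiTRO_semisimple_general M x hx hqi
end

section
/- Cube roots exist in TROs: let H and K be complex Hilbert spaces and let M be a norm-closed complex linear subspace of B(H, K) such that x ∘ y* ∘ z ∈ M for all x, y, z ∈ M. Then for every a ∈ M there exists b ∈ M with a = b ∘ b* ∘ b. -/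
/-!
Put `T = a† a ≥ 0`. For continuous `g`, the operator `a ∘ g(T)` lies in `M`: for polynomial `g`
this is the ternary property applied repeatedly, and `M` is closed. Moreover
`(a g(T))† (a g(T)) = (s g(s)²)(T)` and `(a g(T)) (a g(T))† (a g(T)) = a ∘ (s g(s)³)(T)`, so the
C*-identity gives `‖a g(T)‖² ≤ sup_{σ(T)} s g(s)²`. With `g_ε(s) = max(s, ε)^(-1/3)` the operators
`a g_ε(T)` are Cauchy as `ε → 0` with triple products tending to `a`, so their limit `b`
(morally `u |a|^(1/3)` for the polar decomposition `a = u |a|`) is a cube root of `a`.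
-/

open ContinuousLinearMap Filter Topology

noncomputable def truncInvCbrt (ε s : ℝ) : ℝ := max s ε ^ (-(3⁻¹ : ℝ))

section TruncInvCbrt

variable {ε s : ℝ}

lemma continuous_truncInvCbrt (hε : 0 < ε) : Continuous (truncInvCbrt ε) :=
  (continuous_id.max continuous_const).rpow_const fun _ ↦
    Or.inl (lt_max_of_lt_right hε).ne'

lemma truncInvCbrt_of_le (h : ε ≤ s) : truncInvCbrt ε s = s ^ (-(3⁻¹ : ℝ)) := by
  rw [truncInvCbrt, max_eq_left h]

lemma truncInvCbrt_pos (hs : 0 < s) : 0 < truncInvCbrt ε s :=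
  Real.rpow_pos_of_pos (lt_max_of_lt_left hs) _

lemma truncInvCbrt_le (hs : 0 < s) : truncInvCbrt ε s ≤ s ^ (-(3⁻¹ : ℝ)) :=
  Real.rpow_le_rpow_of_nonpos hs (le_max_left s ε) (by norm_num)

lemma mul_truncInvCbrt_pow_three (hε : 0 < ε) (s : ℝ) :
    s * truncInvCbrt ε s ^ 3 = s / max s ε := by
  have hmax : 0 < max s ε := lt_max_of_lt_right hε
  rw [truncInvCbrt, ← Real.rpow_natCast, ← Real.rpow_mul hmax.le]
  norm_num [Real.rpow_neg_one, div_eq_mul_inv]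

lemma mul_sq_mul_truncInvCbrt_pow_three_sub_one_le (hε : 0 < ε) (hs : 0 ≤ s) :
    s * (s * truncInvCbrt ε s ^ 3 - 1) ^ 2 ≤ ε := by
  rw [mul_truncInvCbrt_pow_three hε]
  rcases le_or_gt ε s with h | h
  · rw [max_eq_left h, div_self (hε.trans_le h).ne', sub_self]
    simpa using hε.le
  · rw [max_eq_right h.le]
    have h0 : 0 ≤ s / ε := div_nonneg hs hε.le
    have h1 : s / ε ≤ 1 := (div_le_one hε).2 h.le
    nlinarith [mul_nonneg hs (mul_nonneg h0 (sub_nonneg.2 h1))]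

lemma mul_sq_truncInvCbrt_sub_le {ε' δ : ℝ} (hδ : 0 ≤ δ) (hε : ε ≤ δ) (hε' : ε' ≤ δ)
    (hs : 0 ≤ s) : s * (truncInvCbrt ε s - truncInvCbrt ε' s) ^ 2 ≤ δ ^ (3⁻¹ : ℝ) := by
  replace hδ : 0 ≤ δ ^ (3⁻¹ : ℝ) := Real.rpow_nonneg hδ _
  rcases le_or_gt δ s with h | h
  · rw [truncInvCbrt_of_le (hε.trans h), truncInvCbrt_of_le (hε'.trans h), sub_self]
    simpa using hδ
  rcases hs.eq_or_lt with rfl | hs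
  · simpa using hδ
  calc s * (truncInvCbrt ε s - truncInvCbrt ε' s) ^ 2 ≤ s * (s ^ (-(3⁻¹ : ℝ))) ^ 2 := by
        refine mul_le_mul_of_nonneg_left ?_ hs.le
        nlinarith [truncInvCbrt_pos (ε := ε) hs, truncInvCbrt_pos (ε := ε') hs,
          truncInvCbrt_le (ε := ε) hs, truncInvCbrt_le (ε := ε') hs]
    _ = s ^ (3⁻¹ : ℝ) := by
        rw [← Real.rpow_natCast, ← Real.rpow_mul hs.le, ← Real.rpow_one_add' hs.le (by norm_num)]
        norm_num
    _ ≤ δ ^ (3⁻¹ : ℝ) := Real.rpow_le_rpow hs.le h.le (by norm_num)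

end TruncInvCbrt

section Operators

variable {H K : Type*}
    [NormedAddCommGroup H] [InnerProductSpace ℂ H] [CompleteSpace H]
    [NormedAddCommGroup K] [InnerProductSpace ℂ K] [CompleteSpace K]
    {a : H →L[ℂ] K} {g : ℝ → ℝ}

variable (a) in
lemma adjoint_comp_self_nonneg : 0 ≤ adjoint a ∘L a :=
  (nonneg_iff_isPositive _).2 (isPositive_adjoint_comp_self a)

lemma comp_cfc_mem (M : Submodule ℂ (H →L[ℂ] K)) (hclosed : IsClosed (M : Set (H →L[ℂ] K)))
    (hTRO : ∀ x ∈ M, ∀ y ∈ M, ∀ z ∈ M, x ∘L ((adjoint y) ∘L z) ∈ M) (ha : a ∈ M) (f : ℝ → ℝ) :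
    a ∘L cfc f (adjoint a ∘L a) ∈ M := by
  let N : Submodule ℝ (H →L[ℂ] H) :=
    (M.comap (compL ℂ H H K a : (H →L[ℂ] H) →ₗ[ℂ] H →L[ℂ] K)).restrictScalars ℝ
  have hN : IsClosed (N : Set (H →L[ℂ] H)) := hclosed.preimage (compL ℂ H H K a).continuous
  have hpow (n : ℕ) : a ∘L (adjoint a ∘L a) ^ n ∈ M := by
    induction n with
    | zero => simpa [one_def] using ha
    | succ n ih =>
      rw [pow_succ', mul_def, comp_assoc]
      exact hTRO a ha a ha _ ih
  have hadjoin :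
      Subalgebra.toSubmodule (StarAlgebra.adjoin ℝ {adjoint a ∘L a}).toSubalgebra ≤ N := by
    rw [StarAlgebra.adjoin_eq_span, Set.star_singleton,
      (adjoint_comp_self_nonneg a).isSelfAdjoint.star_eq, Set.union_self,
      Submonoid.closure_singleton_eq, Submodule.span_le]
    rintro _ ⟨n, rfl⟩
    exact hpow n
  exact closure_minimal hadjoin hN (cfc_mem_elemental f _)

lemma adjoint_comp_cfc_comp_self (hg : ContinuousOn g (spectrum ℝ (adjoint a ∘L a))) :
    adjoint (a ∘L cfc g (adjoint a ∘L a)) ∘L (a ∘L cfc g (adjoint a ∘L a)) =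
      cfc (fun s ↦ s * g s ^ 2) (adjoint a ∘L a) := by
  have hg' : adjoint (cfc g (adjoint a ∘L a)) = cfc g (adjoint a ∘L a) := by
    rw [← star_eq_adjoint]
    exact (cfc_predicate g (adjoint a ∘L a)).star_eq
  have hfun : (fun s ↦ s * g s ^ 2) = fun s ↦ g s * (s * g s) := by ext; ring
  rw [hfun, cfc_mul g (fun s ↦ s * g s) _ hg (by fun_prop),
    cfc_mul (fun s ↦ s) g _ (by fun_prop) hg, cfc_id' ℝ _ (adjoint_comp_self_nonneg a).isSelfAdjoint, adjoint_comp, hg', mul_def, mul_def]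
  simp only [comp_assoc]

lemma comp_cfc_triple (hg : ContinuousOn g (spectrum ℝ (adjoint a ∘L a))) :
    (a ∘L cfc g (adjoint a ∘L a)) ∘L
        (adjoint (a ∘L cfc g (adjoint a ∘L a)) ∘L (a ∘L cfc g (adjoint a ∘L a))) =
      a ∘L cfc (fun s ↦ s * g s ^ 3) (adjoint a ∘L a) := by
  have hfun : (fun s ↦ s * g s ^ 3) = fun s ↦ g s * (s * g s ^ 2) := by ext; ring
  rw [adjoint_comp_cfc_comp_self hg, hfun,
    cfc_mul g (fun s ↦ s * g s ^ 2) _ hg (by fun_prop), mul_def, comp_assoc]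

lemma norm_comp_cfc_le (hg : ContinuousOn g (spectrum ℝ (adjoint a ∘L a))) {c : ℝ} (hc : 0 ≤ c)
    (hbound : ∀ s ∈ spectrum ℝ (adjoint a ∘L a), s * g s ^ 2 ≤ c) :
    ‖a ∘L cfc g (adjoint a ∘L a)‖ ≤ √c := by
  refine Real.le_sqrt_of_sq_le ?_
  rw [sq, ← norm_adjoint_comp_self, adjoint_comp_cfc_comp_self hg]
  refine norm_cfc_le hc fun s hs ↦ ?_
  have hs0 : 0 ≤ s := spectrum_nonneg_of_nonneg (adjoint_comp_self_nonneg a) hs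
  rw [Real.norm_of_nonneg (by positivity)]
  exact hbound s hs

lemma continuous_comp_adjoint_comp_self :
    Continuous fun x : H →L[ℂ] K ↦ x ∘L (adjoint x ∘L x) :=
  continuous_id.clm_comp ((adjoint (E := H) (F := K)).continuous.clm_comp continuous_id)

variable (a) in
noncomputable def cbrtApprox (n : ℕ) : H →L[ℂ] K :=
  a ∘L cfc (truncInvCbrt (1 / (n + 1))) (adjoint a ∘L a)

lemma cauchySeq_cbrtApprox : CauchySeq (cbrtApprox a) := by
  refine cauchySeq_of_le_tendsto_0 (fun N : ℕ ↦ √((1 / (N + 1) : ℝ) ^ (3⁻¹ : ℝ)))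
    (fun n m N hn hm ↦ ?_) ?_
  · have hcont (k : ℕ) := (continuous_truncInvCbrt (ε := 1 / (k + 1)) (by positivity)).continuousOn
      (s := spectrum ℝ (adjoint a ∘L a))
    rw [dist_eq_norm, cbrtApprox, cbrtApprox, ← comp_sub, ← cfc_sub _ _ _ (hcont n) (hcont m)]
    refine norm_comp_cfc_le ((hcont n).sub (hcont m)) (by positivity) fun s hs ↦
      mul_sq_truncInvCbrt_sub_le (by positivity) ?_ ?_
        (spectrum_nonneg_of_nonneg (adjoint_comp_self_nonneg a) hs)
    all_goals gcongr
  · simpa using ((tendsto_one_div_add_atTop_nhds_zero_nat.rpow_const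
      (Or.inr (by norm_num))).sqrt : Tendsto _ _ (𝓝 √((0 : ℝ) ^ (3⁻¹ : ℝ))))

lemma tendsto_cbrtApprox_triple :
    Tendsto (fun n ↦ cbrtApprox a n ∘L (adjoint (cbrtApprox a n) ∘L cbrtApprox a n))
      atTop (𝓝 a) := by
  rw [tendsto_iff_norm_sub_tendsto_zero]
  have hlim := tendsto_one_div_add_atTop_nhds_zero_nat.sqrt
  rw [Real.sqrt_zero] at hlim
  refine squeeze_zero (fun _ ↦ norm_nonneg _) (fun n ↦ ?_) hlim
  have hg := (continuous_truncInvCbrt (ε := 1 / (n + 1)) (by positivity)).continuousOn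
    (s := spectrum ℝ (adjoint a ∘L a))
  have hcube : ContinuousOn (fun s ↦ s * truncInvCbrt (1 / (n + 1)) s ^ 3)
      (spectrum ℝ (adjoint a ∘L a)) := by fun_prop
  calc ‖cbrtApprox a n ∘L (adjoint (cbrtApprox a n) ∘L cbrtApprox a n) - a‖
      = ‖a ∘L cfc (fun s ↦ s * truncInvCbrt (1 / (n + 1)) s ^ 3 - 1) (adjoint a ∘L a)‖ := by
        rw [cbrtApprox, comp_cfc_triple hg, cfc_sub _ _ _ hcube continuousOn_const,
          cfc_const_one ℝ _ (adjoint_comp_self_nonneg a).isSelfAdjoint, comp_sub, one_def,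
          comp_id]
    _ ≤ √(1 / (n + 1)) := by
        refine norm_comp_cfc_le (hcube.sub continuousOn_const) (by positivity) fun s hs ↦ ?_
        exact mul_sq_mul_truncInvCbrt_pow_three_sub_one_le (by positivity)
          (spectrum_nonneg_of_nonneg (adjoint_comp_self_nonneg a) hs)

end Operators

/-- Cube roots exist in TROs. -/
theorem tro_cube_root {H K : Type*}
    [NormedAddCommGroup H] [InnerProductSpace ℂ H] [CompleteSpace H]
    [NormedAddCommGroup K] [InnerProductSpace ℂ K] [CompleteSpace K]
    (M : Submodule ℂ (H →L[ℂ] K)) (hclosed : IsClosed (M : Set (H →L[ℂ] K)))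
    (hTRO : ∀ x ∈ M, ∀ y ∈ M, ∀ z ∈ M, x ∘L ((adjoint y) ∘L z) ∈ M) :
    ∀ a ∈ M, ∃ b ∈ M, a = b ∘L ((adjoint b) ∘L b) := by
  intro a ha
  obtain ⟨b, hb⟩ := cauchySeq_tendsto_of_complete (cauchySeq_cbrtApprox (a := a))
  refine ⟨b, hclosed.mem_of_tendsto hb (.of_forall fun n ↦ comp_cfc_mem M hclosed hTRO ha _), ?_⟩
  exact tendsto_nhds_unique tendsto_cbrtApprox_triple
    ((continuous_comp_adjoint_comp_self.tendsto b).comp hb)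
end

section
/- No isomorphism from the anti-multiplication algebra of 2×2 complex matrices onto M₂(ℂ) can be a *-isomorphism: there is no complex linear bijection φ of the 2×2 complex matrices onto themselves satisfying both φ(X · Y) = φ(X) × φ(Y) and φ(Xᴴ) = φ(X)ᴴ for all 2×2 complex matrices X, Y, where × denotes ordinary matrix multiplication and ᴴ denotes conjugate transpose. -/
open Matrix

/-- The anti-multiplication on 2×2 complex matrices. -/
noncomputable def antiMul (X Y : Matrix (Fin 2) (Fin 2) ℂ) : Matrix (Fin 2) (Fin 2) ℂ :=
  !![-(X 0 0 * Y 0 0) + X 0 1 * Y 1 0, -(X 0 0 * Y 0 1) - X 0 1 * Y 1 1;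
     -(X 1 0 * Y 0 0) - X 1 1 * Y 1 0,  X 1 0 * Y 0 1 - X 1 1 * Y 1 1]

/-!
A *-isomorphism `φ` would send the left unit `-1` of the anti-multiplication to `1`, hence `1` to
`-1`. The Hermitian matrix `σ = !![0, 1; 1, 0]` satisfies `σ · σ = 1`, so `φ σ` would be a
Hermitian matrix whose square is `-1`. But the square of a Hermitian matrix is positive
semidefinite, so its diagonal entries cannot equal `-1`.
-/

theorem Matrix.IsHermitian.mul_self_ne_neg_one {n R : Type*} [Fintype n] [Nonempty n]
    [DecidableEq n] [Ring R] [PartialOrder R] [StarRing R] [StarOrderedRing R] [Nontrivial R]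
    {H : Matrix n n R} (hH : H.IsHermitian) : H * H ≠ -1 := by
  intro hsq
  have hpsd : (-1 : Matrix n n R).PosSemidef := by
    simpa only [hH.eq, hsq] using posSemidef_conjTranspose_mul_self H
  have hle : (1 : R) ≤ 0 := by
    simpa only [neg_apply, one_apply_eq, neg_nonneg] using
      hpsd.diag_nonneg (i := Classical.arbitrary n)
  exact one_ne_zero (le_antisymm hle zero_le_one)

theorem antiMul_neg_one_left (Y : Matrix (Fin 2) (Fin 2) ℂ) : antiMul (-1) Y = Y := by
  ext i j
  fin_cases i <;> fin_cases j <;> simp [antiMul]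

theorem antiMul_swap_self : antiMul !![0, 1; 1, 0] !![0, 1; 1, 0] = 1 := by
  ext i j
  fin_cases i <;> fin_cases j <;> simp [antiMul]

theorem isHermitian_swap {R : Type*} [NonAssocSemiring R] [StarRing R] :
    (!![0, 1; 1, 0] : Matrix (Fin 2) (Fin 2) R).IsHermitian := by
  ext i j
  fin_cases i <;> fin_cases j <;> simp

/-- No isomorphism from the anti-multiplication algebra onto `M₂(ℂ)` is a *-isomorphism. -/
theorem antiMul_no_star_iso :
    ¬ ∃ φ : Matrix (Fin 2) (Fin 2) ℂ ≃ₗ[ℂ] Matrix (Fin 2) (Fin 2) ℂ,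
      (∀ X Y : Matrix (Fin 2) (Fin 2) ℂ, φ (antiMul X Y) = φ X * φ Y) ∧
      (∀ X : Matrix (Fin 2) (Fin 2) ℂ, φ Xᴴ = (φ X)ᴴ) := by
  rintro ⟨φ, hmul, hstar⟩
  have hneg_one : φ (-1) = 1 := by
    simpa only [antiMul_neg_one_left, φ.apply_symm_apply, mul_one] using
      (hmul (-1) (φ.symm 1)).symm
  have hone : φ 1 = -1 := by
    rw [← neg_eq_iff_eq_neg, ← map_neg, hneg_one]
  have hsq : φ !![0, 1; 1, 0] * φ !![0, 1; 1, 0] = -1 := by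
    rw [← hmul, antiMul_swap_self, hone]
  have hherm : (φ !![0, 1; 1, 0]).IsHermitian := by
    rw [IsHermitian, ← hstar, isHermitian_swap.eq]
  exact open scoped ComplexOrder in hherm.mul_self_ne_neg_one hsq
end
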